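/- Assume the Y structure. Let d ∈ {0,1} with P(D=d) > 0. Then cov(X, Y | D=d) = [ P(X=1)·P(X=0)·P(Y=1)·P(Y=0) / P(D=d)^2 ] · ( p_{d|1} − p_{d|0} ) · [ p_{d|1}·( p_{C=1|00}·p_{C=1|11} − p_{C=1|10}·p_{C=1|01} ) − p_{d|0}·( p_{C=0|00}·p_{C=0|11} − p_{C=0|10}·p_{C=0|01} ) ]. -/

import Mathlib

/-!
Conditionally on `D = d`, the covariance of the binary variables `X` and `Y` is the determinant
`N₁₁ N₀₀ - N₁₀ N₀₁` of the table `N_xy = P(X = x, Y = y, D = d)`, divided by `P(D = d)²`.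
Summing the factorization over `C` gives `N_xy = P(x) P(y) (q_xy p_{d|1} + (1 - q_xy) p_{d|0})`
with `q_xy = p_{C=1|xy}`; the complement rule `p_{C=0|xy} = 1 - q_xy` needs `P(x, y) > 0`, which
holds because the factorization forces `X` and `Y` to be independent: summed over `γ` and `d` it
gives `P(x, y) ≤ P(x) P(y)`, and both sides sum to `P(x)` over `y`. Expanding the determinant of
this table is then a polynomial identity.
-/

open MeasureTheory ProbabilityTheory

variable {Ω : Type*} [MeasurableSpace Ω]

/-- The event that the random variable `X` takes the value `x`. -/
def ev (X : Ω → ℝ) (x : ℝ) : Set Ω := {ω | X ω = x}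

/-- The probability of an event, as a real number. -/
noncomputable def pr (P : Measure Ω) (s : Set Ω) : ℝ := (P s).toReal

/-- The conditional probability `P(s | t)`, as a real number. -/
noncomputable def cpr (P : Measure Ω) (s t : Set Ω) : ℝ := pr (P[|t]) s

/-- The covariance of two real-valued random variables. -/
noncomputable def rcov (P : Measure Ω) (X Y : Ω → ℝ) : ℝ :=
  ∫ ω, (X ω - ∫ ω', X ω' ∂P) * (Y ω - ∫ ω', Y ω' ∂P) ∂P

/-- The conditional covariance of two real-valued random variables given an event. -/
noncomputable def covCond (P : Measure Ω) (X Y : Ω → ℝ) (t : Set Ω) : ℝ :=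
  rcov (P[|t]) X Y

/-- The conditional variance of a real-valued random variable given an event. -/
noncomputable def varCond (P : Measure Ω) (X : Ω → ℝ) (t : Set Ω) : ℝ :=
  covCond P X X t

/-- A measurable `{0,1}`-valued random variable. -/
def IsBin (X : Ω → ℝ) : Prop := Measurable X ∧ ∀ ω, X ω = 0 ∨ X ω = 1

section Binary

variable {μ : Measure Ω} {X Y : Ω → ℝ}

lemma measurableSet_ev (hX : Measurable X) (x : ℝ) : MeasurableSet (ev X x) :=
  hX (measurableSet_singleton x)

lemma IsBin.ev_zero (hX : IsBin X) : ev X 0 = (ev X 1)ᶜ := by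
  ext ω
  rcases hX.2 ω with h | h <;> simp [ev, h]

lemma IsBin.mul (hX : IsBin X) (hY : IsBin Y) : IsBin (X * Y) :=
  ⟨hX.1.mul hY.1, fun ω => by
    rcases hX.2 ω with h | h <;> rcases hY.2 ω with h' | h' <;> simp [h, h']⟩

lemma IsBin.ev_mul_one (hX : IsBin X) (hY : IsBin Y) :
    ev (X * Y) 1 = ev X 1 ∩ ev Y 1 := by
  ext ω
  rcases hX.2 ω with h | h <;> rcases hY.2 ω with h' | h' <;> simp [ev, h, h']

lemma IsBin.eq_indicator (hX : IsBin X) : X = (ev X 1).indicator 1 := by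
  funext ω
  rcases hX.2 ω with h | h <;> simp [ev, h]

lemma IsBin.memLp [IsFiniteMeasure μ] (hX : IsBin X) (p : ENNReal) : MemLp X p μ :=
  MemLp.of_bound hX.1.aestronglyMeasurable 1 <| ae_of_all _ fun ω => by
    rcases hX.2 ω with h | h <;> simp [h]

lemma IsBin.integral_eq (hX : IsBin X) : μ[X] = pr μ (ev X 1) := by
  conv_lhs => rw [hX.eq_indicator]
  exact integral_indicator_one (measurableSet_ev hX.1 1)

lemma IsBin.pr_inter_add_pr_inter [IsFiniteMeasure μ] (hX : IsBin X) (s : Set Ω) :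
    pr μ (s ∩ ev X 1) + pr μ (s ∩ ev X 0) = pr μ s := by
  rw [hX.ev_zero, ← Set.sdiff_eq]
  exact measureReal_inter_add_sdiff (measurableSet_ev hX.1 1)

lemma IsBin.pr_add_pr_le_one [IsZeroOrProbabilityMeasure μ] (hX : IsBin X) :
    pr μ (ev X 1) + pr μ (ev X 0) ≤ 1 := by
  simpa using (hX.pr_inter_add_pr_inter Set.univ).trans_le (measureReal_le_one (μ := μ))

lemma IsBin.pr_ev_zero [IsProbabilityMeasure μ] (hX : IsBin X) :
    pr μ (ev X 0) = 1 - pr μ (ev X 1) := by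
  rw [hX.ev_zero]
  exact probReal_compl_eq_one_sub (measurableSet_ev hX.1 1)

lemma IsBin.pr_ev_pos [IsProbabilityMeasure μ] (hX : IsBin X) (h1 : 0 < pr μ (ev X 1))
    (h1' : pr μ (ev X 1) < 1) {x : ℝ} (hx : x = 0 ∨ x = 1) : 0 < pr μ (ev X x) := by
  rcases hx with rfl | rfl
  · rw [hX.pr_ev_zero]
    linarith
  · exact h1

lemma IsBin.rcov_eq [IsProbabilityMeasure μ] (hX : IsBin X) (hY : IsBin Y) :
    rcov μ X Y = pr μ (ev X 1 ∩ ev Y 1) * pr μ (ev X 0 ∩ ev Y 0) -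
      pr μ (ev X 1 ∩ ev Y 0) * pr μ (ev X 0 ∩ ev Y 1) := by
  change cov[X, Y; μ] = _
  rw [covariance_eq_sub (hX.memLp 2) (hY.memLp 2), (hX.mul hY).integral_eq,
    hX.integral_eq, hY.integral_eq, hX.ev_mul_one hY]
  have hX1 := hY.pr_inter_add_pr_inter (μ := μ) (ev X 1)
  have hX0 := hY.pr_inter_add_pr_inter (μ := μ) (ev X 0)
  have hY1 := hX.pr_inter_add_pr_inter (μ := μ) (ev Y 1)
  rw [hX.pr_ev_zero] at hX0
  simp only [Set.inter_comm (ev Y 1)] at hY1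
  rw [← hX1, ← hY1]
  linear_combination (-pr μ (ev X 1 ∩ ev Y 1)) * (hX0 + hX1)

end Binary

section Conditional

variable {P : Measure Ω} {X Y : Ω → ℝ} {t : Set Ω}

lemma pr_cond_eq_div (ht : MeasurableSet t) (s : Set Ω) :
    pr (P[|t]) s = pr P (s ∩ t) / pr P t := by
  rw [pr, pr, pr, cond_apply ht, ENNReal.toReal_mul, ENNReal.toReal_inv, Set.inter_comm,
    inv_mul_eq_div]

lemma IsBin.cpr_ev_zero [IsFiniteMeasure P] (hX : IsBin X) (ht : pr P t ≠ 0) :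
    cpr P (ev X 0) t = 1 - cpr P (ev X 1) t :=
  have := cond_isProbabilityMeasure ((measureReal_ne_zero_iff).mp ht)
  hX.pr_ev_zero

lemma IsBin.covCond_eq [IsFiniteMeasure P] (hX : IsBin X) (hY : IsBin Y)
    (ht : MeasurableSet t) (hPt : pr P t ≠ 0) :
    covCond P X Y t =
      (pr P (ev X 1 ∩ ev Y 1 ∩ t) * pr P (ev X 0 ∩ ev Y 0 ∩ t) -
        pr P (ev X 1 ∩ ev Y 0 ∩ t) * pr P (ev X 0 ∩ ev Y 1 ∩ t)) / pr P t ^ 2 := by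
  have := cond_isProbabilityMeasure ((measureReal_ne_zero_iff).mp hPt)
  rw [covCond, hX.rcov_eq hY]
  simp only [pr_cond_eq_div ht]
  ring

end Conditional

def YFactorization (P : Measure Ω) (X Y C D : Ω → ℝ) : Prop :=
  ∀ x y γ d : ℝ, (x = 0 ∨ x = 1) → (y = 0 ∨ y = 1) → (γ = 0 ∨ γ = 1) → (d = 0 ∨ d = 1) →
    pr P (ev X x ∩ ev Y y ∩ ev C γ ∩ ev D d) =
      pr P (ev X x) * pr P (ev Y y) * cpr P (ev C γ) (ev X x ∩ ev Y y) *
        cpr P (ev D d) (ev C γ)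

namespace YFactorization

variable {P : Measure Ω} [IsProbabilityMeasure P] {X Y C D : Ω → ℝ} {x y : ℝ}

lemma pr_inter_inter_eq (hfact : YFactorization P X Y C D) (hC : IsBin C)
    (hx : x = 0 ∨ x = 1) (hy : y = 0 ∨ y = 1) {d : ℝ} (hd : d = 0 ∨ d = 1) :
    pr P (ev X x ∩ ev Y y ∩ ev D d) =
      pr P (ev X x) * pr P (ev Y y) *
        (cpr P (ev C 1) (ev X x ∩ ev Y y) * cpr P (ev D d) (ev C 1) +
          cpr P (ev C 0) (ev X x ∩ ev Y y) * cpr P (ev D d) (ev C 0)) := by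
  rw [← hC.pr_inter_add_pr_inter, Set.inter_right_comm, Set.inter_right_comm _ (ev D d),
    hfact x y 1 d hx hy (.inr rfl) hd, hfact x y 0 d hx hy (.inl rfl) hd]
  ring

/-- Only an inequality: the conditional probabilities given a null event `{X = x, Y = y}`
vanish, so summing the factorization over `γ` and `d` may lose mass. -/
lemma pr_inter_le_mul (hfact : YFactorization P X Y C D) (hC : IsBin C) (hD : IsBin D)
    (hx : x = 0 ∨ x = 1) (hy : y = 0 ∨ y = 1) :
    pr P (ev X x ∩ ev Y y) ≤ pr P (ev X x) * pr P (ev Y y) := by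
  set s := ev X x ∩ ev Y y
  have hq : cpr P (ev C 1) s + cpr P (ev C 0) s ≤ 1 := hC.pr_add_pr_le_one
  have hr (γ : ℝ) : cpr P (ev D 1) (ev C γ) + cpr P (ev D 0) (ev C γ) ≤ 1 :=
    hD.pr_add_pr_le_one
  rw [← hD.pr_inter_add_pr_inter, hfact.pr_inter_inter_eq hC hx hy (.inr rfl),
    hfact.pr_inter_inter_eq hC hx hy (.inl rfl)]
  have hab : 0 ≤ pr P (ev X x) * pr P (ev Y y) := mul_nonneg measureReal_nonneg measureReal_nonneg
  calc _ = pr P (ev X x) * pr P (ev Y y) *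
        (cpr P (ev C 1) s * (cpr P (ev D 1) (ev C 1) + cpr P (ev D 0) (ev C 1)) +
          cpr P (ev C 0) s * (cpr P (ev D 1) (ev C 0) + cpr P (ev D 0) (ev C 0))) := by ring
    _ ≤ pr P (ev X x) * pr P (ev Y y) * (cpr P (ev C 1) s * 1 + cpr P (ev C 0) s * 1) := by
        gcongr
        · exact measureReal_nonneg
        · exact hr 1
        · exact measureReal_nonneg
        · exact hr 0
    _ ≤ pr P (ev X x) * pr P (ev Y y) * 1 := by gcongr; linarith
    _ = _ := mul_one _

lemma pr_inter_eq_mul (hfact : YFactorization P X Y C D) (hY : IsBin Y) (hC : IsBin C)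
    (hD : IsBin D) (hx : x = 0 ∨ x = 1) (hy : y = 0 ∨ y = 1) :
    pr P (ev X x ∩ ev Y y) = pr P (ev X x) * pr P (ev Y y) := by
  have h1 := hfact.pr_inter_le_mul hC hD hx (.inr rfl)
  have h0 := hfact.pr_inter_le_mul hC hD hx (.inl rfl)
  have hsplit := hY.pr_inter_add_pr_inter (μ := P) (ev X x)
  have hsum : pr P (ev X x) * pr P (ev Y 1) + pr P (ev X x) * pr P (ev Y 0) = pr P (ev X x) := by
    rw [hY.pr_ev_zero]
    ring
  rcases hy with rfl | rfl <;> linarith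

end YFactorization

/-- Y-bias on the covariance scale, conditioning on `D = d`. -/
theorem Y_bias_cov (P : Measure Ω) [IsProbabilityMeasure P]
    (X Y C D : Ω → ℝ) (hX : IsBin X) (hY : IsBin Y) (hC : IsBin C) (hD : IsBin D)
    (hX1 : 0 < pr P (ev X 1)) (hX1' : pr P (ev X 1) < 1)
    (hY1 : 0 < pr P (ev Y 1)) (hY1' : pr P (ev Y 1) < 1)
    (hfact : ∀ x y γ d : ℝ, (x = 0 ∨ x = 1) → (y = 0 ∨ y = 1) → (γ = 0 ∨ γ = 1) →
      (d = 0 ∨ d = 1) →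
      pr P (ev X x ∩ ev Y y ∩ ev C γ ∩ ev D d) =
        pr P (ev X x) * pr P (ev Y y) * cpr P (ev C γ) (ev X x ∩ ev Y y) *
          cpr P (ev D d) (ev C γ))
    (d : ℝ) (hd : d = 0 ∨ d = 1) (hDd : 0 < pr P (ev D d)) :
    covCond P X Y (ev D d) =
      pr P (ev X 1) * pr P (ev X 0) * pr P (ev Y 1) * pr P (ev Y 0) / (pr P (ev D d)) ^ 2 *
        (cpr P (ev D d) (ev C 1) - cpr P (ev D d) (ev C 0)) *
        (cpr P (ev D d) (ev C 1) *
            (cpr P (ev C 1) (ev X 0 ∩ ev Y 0) * cpr P (ev C 1) (ev X 1 ∩ ev Y 1) -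
              cpr P (ev C 1) (ev X 1 ∩ ev Y 0) * cpr P (ev C 1) (ev X 0 ∩ ev Y 1)) -
          cpr P (ev D d) (ev C 0) *
            (cpr P (ev C 0) (ev X 0 ∩ ev Y 0) * cpr P (ev C 0) (ev X 1 ∩ ev Y 1) -
              cpr P (ev C 0) (ev X 1 ∩ ev Y 0) * cpr P (ev C 0) (ev X 0 ∩ ev Y 1))) := by
  have hfact : YFactorization P X Y C D := hfact
  have hcell {x y : ℝ} (hx : x = 0 ∨ x = 1) (hy : y = 0 ∨ y = 1) :=
    hfact.pr_inter_inter_eq hC hx hy hd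
  have hC0 {x y : ℝ} (hx : x = 0 ∨ x = 1) (hy : y = 0 ∨ y = 1) :
      cpr P (ev C 0) (ev X x ∩ ev Y y) = 1 - cpr P (ev C 1) (ev X x ∩ ev Y y) := by
    refine hC.cpr_ev_zero ?_
    rw [hfact.pr_inter_eq_mul hY hC hD hx hy]
    exact (mul_pos (hX.pr_ev_pos hX1 hX1' hx) (hY.pr_ev_pos hY1 hY1' hy)).ne'
  have h0 : (0 : ℝ) = 0 ∨ (0 : ℝ) = 1 := .inl rfl
  have h1 : (1 : ℝ) = 0 ∨ (1 : ℝ) = 1 := .inr rfl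
  rw [hX.covCond_eq hY (measurableSet_ev hD.1 d) hDd.ne', hcell h1 h1, hcell h0 h0, hcell h1 h0,
    hcell h0 h1, hC0 h0 h0, hC0 h0 h1, hC0 h1 h0, hC0 h1 h1]
  ring
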